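/- Let D ∈ ℂ^{d×n} (n ≥ d) be a full spark dictionary, i.e., every d columns of D are linearly independent, and let A ∈ ℂ^{m×d}. If the composite matrix AD ∈ ℂ^{m×n} satisfies the null space property of order k, then there exists a constant c > 0 such that A satisfies the strong D-null space property of order k with constant c. -/

import Mathlib

open Finset Matrix

/-- The ℓ¹ norm of a vector: the sum of the absolute values of its entries. -/
noncomputable def l1norm {n : Type*} [Fintype n] (v : n → ℂ) : ℝ :=
  ∑ i, ‖v i‖

/-- The ℓ² (Euclidean) norm of a vector. -/
noncomputable def l2norm {n : Type*} [Fintype n] (v : n → ℂ) : ℝ :=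
  Real.sqrt (∑ i, ‖v i‖ ^ 2)

/-- `restrict v T` agrees with `v` on the index set `T` and is zero elsewhere. -/
def restrict {n : Type*} [Fintype n] [DecidableEq n] (v : n → ℂ) (T : Finset n) : n → ℂ :=
  fun i => if i ∈ T then v i else 0

/-- A vector is `k`-sparse if it has at most `k` nonzero entries. -/
def KSparse {n : Type*} [Fintype n] [DecidableEq n] (k : ℕ) (z : n → ℂ) : Prop :=
  ∃ T : Finset n, T.card ≤ k ∧ ∀ i ∉ T, z i = 0

/-- `A` satisfies the `D`-null space property of order `k` (`k`-`D`-NSP):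
for every index set `T` with `|T| ≤ k` and every `v` with `Dv ∈ ker A` and `Dv ≠ 0`,
there exists `u ∈ ker D` such that `‖v_T + u‖₁ < ‖v_{T^c}‖₁`. -/
def DNSP {m d n : Type*} [Fintype m] [Fintype d] [Fintype n] [DecidableEq n]
    (A : Matrix m d ℂ) (D : Matrix d n ℂ) (k : ℕ) : Prop :=
  ∀ T : Finset n, T.card ≤ k → ∀ v : n → ℂ,
    A.mulVec (D.mulVec v) = 0 → D.mulVec v ≠ 0 →
    ∃ u : n → ℂ, D.mulVec u = 0 ∧ l1norm (restrict v T + u) < l1norm (restrict v Tᶜ)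

/-- `M` satisfies the null space property of order `k` (`k`-NSP):
for every nonzero `v ∈ ker M` and every index set `T` with `|T| ≤ k`,
`‖v_T‖₁ < ‖v_{T^c}‖₁`. -/
def NSP {m n : Type*} [Fintype m] [Fintype n] [DecidableEq n]
    (M : Matrix m n ℂ) (k : ℕ) : Prop :=
  ∀ v : n → ℂ, M.mulVec v = 0 → v ≠ 0 → ∀ T : Finset n, T.card ≤ k →
    l1norm (restrict v T) < l1norm (restrict v Tᶜ)

/-- `A` satisfies the strong `D`-null space property of order `k` with constant `c`
(`k`-`D`-SNSP): for every index set `T` with `|T| ≤ k` and every `v ∈ ker (AD)`,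
there exists `u ∈ ker D` such that `‖v_{T^c}‖₁ − ‖v_T + u‖₁ ≥ c‖Dv‖₂`. -/
def DSNSP {m d n : Type*} [Fintype m] [Fintype d] [Fintype n] [DecidableEq n]
    (A : Matrix m d ℂ) (D : Matrix d n ℂ) (k : ℕ) (c : ℝ) : Prop :=
  ∀ T : Finset n, T.card ≤ k → ∀ v : n → ℂ, (A * D).mulVec v = 0 →
    ∃ u : n → ℂ, D.mulVec u = 0 ∧
      c * l2norm (D.mulVec v) ≤ l1norm (restrict v Tᶜ) - l1norm (restrict v T + u)

/-- A `d × n` matrix is full spark if every `d` of its columns are linearly independent. -/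
def FullSpark {d n : ℕ} (D : Matrix (Fin d) (Fin n) ℂ) : Prop :=
  ∀ S : Finset (Fin n), S.card = d →
    LinearIndependent ℂ (fun j : S => Dᵀ (j : Fin n))

/-!
For `v ∈ ker (AD)` and a fixed `T` with `|T| ≤ k`, both `‖v_{T^c}‖₁ - ‖v_T‖₁` and `‖Dv‖₂` are
continuous and positively homogeneous in `v`, and the null space property makes the first one
positive on the unit sphere of `ker (AD)`. By compactness of that sphere, the first one dominates
a positive multiple of the second; taking the smallest multiple over the finitely many `T` gives
the strong `D`-null space property with `u = 0`.
-/

open Filter Topology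

theorem eventually_mul_le_of_posHomogeneous {E : Type*} [NormedAddCommGroup E]
    [NormedSpace ℝ E] [ProperSpace E] {K : Set E} (hK : IsClosed K)
    (hK_smul : ∀ v ∈ K, ∀ t : ℝ, 0 ≤ t → t • v ∈ K) {f g : E → ℝ}
    (hf : Continuous f) (hg : Continuous g)
    (hf_smul : ∀ t : ℝ, 0 ≤ t → ∀ v, f (t • v) = t * f v)
    (hg_smul : ∀ t : ℝ, 0 ≤ t → ∀ v, g (t • v) = t * g v)
    (hg_pos : ∀ v ∈ K, v ≠ 0 → 0 < g v) :
    ∀ᶠ c in 𝓝[>] (0 : ℝ), ∀ v ∈ K, c * f v ≤ g v := by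
  have hS : IsCompact (K ∩ Metric.sphere 0 1) := (isCompact_sphere 0 1).inter_left hK
  obtain ⟨ε, hε, hgε⟩ := hS.exists_forall_le' hg.continuousOn fun v hv =>
    hg_pos v hv.1 (ne_zero_of_mem_unit_sphere ⟨v, hv.2⟩)
  obtain ⟨C, hC⟩ := hS.exists_bound_of_continuousOn hf.continuousOn
  filter_upwards [Ioo_mem_nhdsGT (div_pos hε (by positivity : 0 < |C| + 1))]
    with c ⟨hc, hcε⟩
  have on_sphere : ∀ w ∈ K ∩ Metric.sphere 0 1, c * f w ≤ g w := fun w hw =>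
    calc c * f w ≤ c * (|C| + 1) := by
          gcongr
          linarith [le_abs_self C, (Real.le_norm_self (f w)).trans (hC w hw)]
      _ ≤ ε := ((lt_div_iff₀ (by positivity)).1 hcε).le
      _ ≤ g w := hgε w hw
  intro v hv
  rcases eq_or_ne v 0 with rfl | hv0
  · have hf0 := hf_smul 0 le_rfl 0
    have hg0 := hg_smul 0 le_rfl 0
    simp only [smul_zero, zero_mul] at hf0 hg0
    simp [hf0, hg0]
  · set w := ‖v‖⁻¹ • v
    have hw : w ∈ K ∩ Metric.sphere 0 1 :=
      ⟨hK_smul v hv _ (by positivity), by simp [w, norm_smul, hv0]⟩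
    have hvw : v = ‖v‖ • w := by simp [w, smul_smul, hv0]
    rw [hvw, hf_smul _ (norm_nonneg v), hg_smul _ (norm_nonneg v)]
    calc c * (‖v‖ * f w) = ‖v‖ * (c * f w) := by ring
      _ ≤ ‖v‖ * g w := by gcongr; exact on_sphere w hw

section Norms

variable {ι : Type*} [Fintype ι]

theorem l1norm_smul {𝕜 : Type*} [NormedField 𝕜] [NormedSpace 𝕜 ℂ] (c : 𝕜) (v : ι → ℂ) :
    l1norm (c • v) = ‖c‖ * l1norm v := by
  simp [l1norm, norm_smul, Finset.mul_sum]

theorem l2norm_smul {𝕜 : Type*} [NormedField 𝕜] [NormedSpace 𝕜 ℂ] (c : 𝕜) (v : ι → ℂ) :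
    l2norm (c • v) = ‖c‖ * l2norm v := by
  simp only [l2norm, Pi.smul_apply, norm_smul, mul_pow, ← Finset.mul_sum]
  rw [Real.sqrt_mul (by positivity), Real.sqrt_sq (norm_nonneg c)]

theorem restrict_smul [DecidableEq ι] {R : Type*} [SMulZeroClass R ℂ] (c : R) (v : ι → ℂ)
    (T : Finset ι) : restrict (c • v) T = c • restrict v T := by
  ext i
  by_cases hi : i ∈ T <;> simp [_root_.restrict, hi]

theorem continuous_l1norm : Continuous (l1norm : (ι → ℂ) → ℝ) := by
  unfold l1norm
  fun_prop

theorem continuous_l2norm : Continuous (l2norm : (ι → ℂ) → ℝ) := by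
  unfold l2norm
  fun_prop

theorem continuous_restrict [DecidableEq ι] (T : Finset ι) :
    Continuous fun v : ι → ℂ => restrict v T :=
  continuous_pi fun i => by
    by_cases hi : i ∈ T <;> simp [_root_.restrict, hi, continuous_apply, continuous_const]

end Norms

theorem NSP.eventually_mul_l2norm_mulVec_le {ι κ μ : Type*} [Fintype ι] [DecidableEq ι]
    [Fintype κ] [Fintype μ] {M : Matrix μ ι ℂ} {k : ℕ} (hM : NSP M k) (B : Matrix κ ι ℂ)
    {T : Finset ι} (hT : T.card ≤ k) :
    ∀ᶠ c in 𝓝[>] (0 : ℝ), ∀ v, M *ᵥ v = 0 →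
      c * l2norm (B *ᵥ v) ≤ l1norm (restrict v Tᶜ) - l1norm (restrict v T) := by
  refine eventually_mul_le_of_posHomogeneous (K := {v | M *ᵥ v = 0})
    (isClosed_eq (continuous_const.matrix_mulVec continuous_id) continuous_const)
    (fun v hv t _ => by simp_all [Matrix.mulVec_smul])
    (continuous_l2norm.comp (continuous_const.matrix_mulVec continuous_id))
    ((continuous_l1norm.comp (continuous_restrict _)).sub
      (continuous_l1norm.comp (continuous_restrict _)))
    (fun t ht v => ?_) (fun t ht v => ?_) (fun v hv hv0 => sub_pos.2 (hM v hv hv0 T hT))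
  · simp [Matrix.mulVec_smul, l2norm_smul, abs_of_nonneg ht]
  · simp only [restrict_smul, l1norm_smul, Real.norm_eq_abs, abs_of_nonneg ht]
    ring

theorem stmt_7_general {m d n : ℕ} (D : Matrix (Fin d) (Fin n) ℂ)
    (A : Matrix (Fin m) (Fin d) ℂ) (k : ℕ) (hAD : NSP (A * D) k) :
    ∃ c : ℝ, 0 < c ∧ DSNSP A D k c := by
  have h : ∀ᶠ c in 𝓝[>] (0 : ℝ), ∀ T : Finset (Fin n), T.card ≤ k → ∀ v, (A * D) *ᵥ v = 0 →
      c * l2norm (D *ᵥ v) ≤ l1norm (restrict v Tᶜ) - l1norm (restrict v T) :=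
    eventually_all.2 fun T =>
      eventually_imp_distrib_left.2 fun hT => hAD.eventually_mul_l2norm_mulVec_le D hT
  obtain ⟨c, hc, hc_pos⟩ := (h.and self_mem_nhdsWithin).exists
  exact ⟨c, hc_pos, fun T hT v hv => ⟨0, Matrix.mulVec_zero D, by simpa using hc T hT v hv⟩⟩

/-- If `D` is a full spark dictionary and `AD` satisfies the null space property of order
`k`, then there exists a constant `c > 0` such that `A` satisfies the strong `D`-null
space property of order `k` with constant `c`. -/
theorem stmt_7 {m d n : ℕ} (hn : d ≤ n) (D : Matrix (Fin d) (Fin n) ℂ) (hD : FullSpark D)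
    (A : Matrix (Fin m) (Fin d) ℂ) (k : ℕ) (hAD : NSP (A * D) k) :
    ∃ c : ℝ, 0 < c ∧ DSNSP A D k c :=
  stmt_7_general D A k hAD
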